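/- arXiv:1708.05397 — 2 statements merged into one kernel-verified Lean document; each statement's English description precedes it below -/
import Mathlib

section
/- Let u and v be orthogonal twin-harmonics on an open set Ω ⊆ ℝ^N and suppose u(x) ≠ 0 for all x ∈ Ω. Then the function f(x) = arctan(v(x)/u(x)) is perfectly harmonic on Ω, i.e. Δf = 0 and Δ_∞f = 0 at every point of Ω. -/
noncomputable section

/-- The partial derivative `∂f/∂xᵢ` of a function on `ℝ^N`. -/
noncomputable def pd {N : ℕ} (f : (Fin N → ℝ) → ℝ) (i : Fin N) (x : Fin N → ℝ) : ℝ :=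
  fderiv ℝ f x (Pi.single i 1)

/-- The Laplacian `Δf = Σᵢ ∂²f/∂xᵢ²`. -/
noncomputable def lap {N : ℕ} (f : (Fin N → ℝ) → ℝ) (x : Fin N → ℝ) : ℝ :=
  ∑ i, pd (pd f i) i x

/-- The ∞-Laplacian `Δ_∞ f = Σᵢⱼ (∂f/∂xᵢ)(∂f/∂xⱼ)(∂²f/∂xᵢ∂xⱼ)`. -/
noncomputable def infLap {N : ℕ} (f : (Fin N → ℝ) → ℝ) (x : Fin N → ℝ) : ℝ :=
  ∑ i, ∑ j, pd f i x * pd f j x * pd (pd f j) i x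

/-- The 1-Laplacian `Δ₁f = |∇f|²Δf − Δ_∞f`. -/
noncomputable def lap1 {N : ℕ} (f : (Fin N → ℝ) → ℝ) (x : Fin N → ℝ) : ℝ :=
  (∑ i, pd f i x ^ 2) * lap f x - infLap f x

/-- A C² function is perfectly harmonic on `Ω` if `Δf = 0` and `Δ_∞ f = 0` on `Ω`. -/
def PerfectlyHarmonic {N : ℕ} (f : (Fin N → ℝ) → ℝ) (Ω : Set (Fin N → ℝ)) : Prop :=
  ContDiffOn ℝ 2 f Ω ∧ ∀ x ∈ Ω, lap f x = 0 ∧ infLap f x = 0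

/-- Two C² functions `u, v` are orthogonal twin-harmonics on `Ω` if at every point of `Ω`:
`v·Δu = u·Δv`, `v·Δ_∞u = u·Δ_∞v`, `|∇u|² = |∇v|²`, and `∇u·∇v = 0`. -/
def TwinHarmonics {N : ℕ} (u v : (Fin N → ℝ) → ℝ) (Ω : Set (Fin N → ℝ)) : Prop :=
  ContDiffOn ℝ 2 u Ω ∧ ContDiffOn ℝ 2 v Ω ∧ ∀ x ∈ Ω,
    v x * lap u x = u x * lap v x ∧
    v x * infLap u x = u x * infLap v x ∧
    (∑ i, pd u i x ^ 2) = (∑ i, pd v i x ^ 2) ∧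
    (∑ i, pd u i x * pd v i x) = 0


/-!
Write `W = u² + v²` and `w = u ∇v - v ∇u`, so that `∇f = w / W` and
`D²f = (D w) / W - ∇W ⊗ w / W²`. Differentiating the constraints `∇u · ∇v = 0` and
`|∇u|² = |∇v|²` gives `D²v ∇u = -D²u ∇v` and `D²u ∇u = D²v ∇v`, while the constraints themselves
give `∇W · w = 0`. Hence `Δf = (u Δv - v Δu) / W`, and in `Δ_∞ f` the antisymmetric part of `D w`
drops out and `u D²v w - v D²u w = W D²v ∇v`, leaving `Δ_∞ f = (u Δ_∞ v - v Δ_∞ u) / W²`.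
-/

open Matrix Filter Topology

section PartialDerivatives

variable {N : ℕ} {f g : (Fin N → ℝ) → ℝ} {i : Fin N} {x : Fin N → ℝ}

theorem Filter.EventuallyEq.pd_eq (h : f =ᶠ[𝓝 x] g) : pd f i x = pd g i x := by
  rw [pd, pd, h.fderiv_eq]

theorem pd_add (hf : DifferentiableAt ℝ f x) (hg : DifferentiableAt ℝ g x) :
    pd (fun y => f y + g y) i x = pd f i x + pd g i x := by
  simp [pd, fderiv_fun_add hf hg]

theorem pd_sub (hf : DifferentiableAt ℝ f x) (hg : DifferentiableAt ℝ g x) :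
    pd (fun y => f y - g y) i x = pd f i x - pd g i x := by
  simp [pd, fderiv_fun_sub hf hg]

theorem pd_mul (hf : DifferentiableAt ℝ f x) (hg : DifferentiableAt ℝ g x) :
    pd (fun y => f y * g y) i x = f x * pd g i x + g x * pd f i x := by
  simp [pd, fderiv_fun_mul hf hg]

theorem pd_div (hf : DifferentiableAt ℝ f x) (hg : DifferentiableAt ℝ g x) (hx : g x ≠ 0) :
    pd (fun y => f y / g y) i x = (g x * pd f i x - f x * pd g i x) / g x ^ 2 := by
  have hinv : HasFDerivAt (fun y => (g y)⁻¹) (-(g x ^ 2)⁻¹ • fderiv ℝ g x) x :=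
    (hasDerivAt_inv hx).comp_hasFDerivAt x hg.hasFDerivAt
  simp only [div_eq_mul_inv, pd]
  rw [(hf.hasFDerivAt.fun_mul hinv).fderiv]
  simp only [_root_.add_apply, _root_.smul_apply, smul_eq_mul, neg_mul, mul_neg]
  field_simp
  ring

theorem pd_arctan (hf : DifferentiableAt ℝ f x) :
    pd (fun y => Real.arctan (f y)) i x = pd f i x / (1 + f x ^ 2) := by
  simp [pd, fderiv_arctan hf, div_eq_inv_mul]

theorem pd_sum {ι : Type*} {s : Finset ι} {F : ι → (Fin N → ℝ) → ℝ}
    (hF : ∀ k ∈ s, DifferentiableAt ℝ (F k) x) :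
    pd (fun y => ∑ k ∈ s, F k y) i x = ∑ k ∈ s, pd (F k) i x := by
  simp [pd, fderiv_fun_sum hF]

theorem ContDiffAt.contDiffAt_pd {n m : WithTop ℕ∞} (hf : ContDiffAt ℝ n f x) (hmn : m + 1 ≤ n)
    (i : Fin N) : ContDiffAt ℝ m (pd f i) x :=
  (hf.fderiv_right hmn).clm_apply contDiffAt_const

theorem ContDiffAt.differentiableAt_pd (hf : ContDiffAt ℝ 2 f x) (i : Fin N) :
    DifferentiableAt ℝ (pd f i) x :=
  (hf.contDiffAt_pd (m := 1) (by norm_num) i).differentiableAt one_ne_zero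

end PartialDerivatives

section GradientHessian

variable {N : ℕ} {f g : (Fin N → ℝ) → ℝ} {x : Fin N → ℝ}

def grad (f : (Fin N → ℝ) → ℝ) (x : Fin N → ℝ) : Fin N → ℝ := fun i => pd f i x

def hess (f : (Fin N → ℝ) → ℝ) (x : Fin N → ℝ) : Matrix (Fin N) (Fin N) ℝ :=
  Matrix.of fun i j => pd (pd f j) i x

theorem lap_eq_trace_hess : lap f x = trace (hess f x) := rfl

theorem infLap_eq_dotProduct_hess_mulVec : infLap f x = grad f x ⬝ᵥ hess f x *ᵥ grad f x := by
  simp only [infLap, dotProduct, mulVec, grad, hess, of_apply, Finset.mul_sum]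
  exact Finset.sum_congr rfl fun i _ => Finset.sum_congr rfl fun j _ => by ring

theorem sum_pd_mul_pd : ∑ i, pd f i x * pd g i x = grad f x ⬝ᵥ grad g x := rfl

theorem sum_pd_sq : ∑ i, pd f i x ^ 2 = grad f x ⬝ᵥ grad f x := by
  simp only [sq]; rfl

theorem Filter.EventuallyEq.grad_eq (h : f =ᶠ[𝓝 x] g) : grad f x = grad g x :=
  funext fun _ => h.pd_eq

theorem grad_const (c : ℝ) : grad (fun _ => c) x = 0 := by
  ext i; simp [grad, pd]

end GradientHessian

section ArctanRatioAlgebra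

variable {n : Type*} [Fintype n] (a b : ℝ) (p q : n → ℝ) (U V : Matrix n n ℝ)

/- The gradient and Hessian of `arctan (v / u)` at a point where `u, v, ∇u, ∇v, D²u, D²v` take
the values `a, b, p, q, U, V`. -/
def arctanRatioGrad : n → ℝ := (a ^ 2 + b ^ 2)⁻¹ • (a • q - b • p)

def arctanRatioHess : Matrix n n ℝ :=
  (a ^ 2 + b ^ 2)⁻¹ • (vecMulVec p q - vecMulVec q p + a • V - b • U) -
    ((a ^ 2 + b ^ 2) ^ 2)⁻¹ • vecMulVec ((2 * a) • p + (2 * b) • q) (a • q - b • p)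

variable {a b p q U V}

theorem add_smul_dotProduct_sub_smul_eq_zero (hpq : p ⬝ᵥ q = 0) (hnorm : p ⬝ᵥ p = q ⬝ᵥ q) :
    ((2 * a) • p + (2 * b) • q) ⬝ᵥ (a • q - b • p) = 0 := by
  simp only [add_dotProduct, dotProduct_sub, smul_dotProduct, dotProduct_smul, smul_eq_mul,
    dotProduct_comm q p, hpq, hnorm]
  ring

theorem trace_arctanRatioHess (hpq : p ⬝ᵥ q = 0) (hnorm : p ⬝ᵥ p = q ⬝ᵥ q)
    (hlap : b * trace U = a * trace V) :
    trace (arctanRatioHess a b p q U V) = 0 := by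
  simp only [arctanRatioHess, trace_sub, trace_add, trace_smul, trace_vecMulVec,
    add_smul_dotProduct_sub_smul_eq_zero hpq hnorm, dotProduct_comm q p, smul_eq_mul]
  linear_combination (-(a ^ 2 + b ^ 2)⁻¹) * hlap

theorem arctanRatioGrad_dotProduct_arctanRatioHess_mulVec (hpq : p ⬝ᵥ q = 0)
    (hnorm : p ⬝ᵥ p = q ⬝ᵥ q) (hinf : b * (p ⬝ᵥ U *ᵥ p) = a * (q ⬝ᵥ V *ᵥ q))
    (hUp : U *ᵥ p = V *ᵥ q) (hVp : V *ᵥ p = -(U *ᵥ q)) :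
    arctanRatioGrad a b p q ⬝ᵥ arctanRatioHess a b p q U V *ᵥ arctanRatioGrad a b p q = 0 := by
  rw [hUp] at hinf
  simp only [arctanRatioGrad, arctanRatioHess, sub_mulVec, add_mulVec, smul_mulVec, mulVec_sub,
    mulVec_smul, vecMulVec_mulVec, op_smul_eq_smul, hUp, hVp, dotProduct_sub, dotProduct_add,
    dotProduct_smul, dotProduct_neg, sub_dotProduct, smul_dotProduct, smul_eq_mul,
    dotProduct_comm q p, hpq, hnorm]
  linear_combination (-((a ^ 2 + b ^ 2)⁻¹ ^ 3 * (a ^ 2 + b ^ 2))) * hinf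

end ArctanRatioAlgebra

section ArctanRatio

variable {N : ℕ} {u v : (Fin N → ℝ) → ℝ} {x : Fin N → ℝ}

theorem pd_arctan_div (hu : DifferentiableAt ℝ u x) (hv : DifferentiableAt ℝ v x)
    (h0 : u x ≠ 0) (i : Fin N) :
    pd (fun y => Real.arctan (v y / u y)) i x =
      (u x * pd v i x - v x * pd u i x) / (u x * u x + v x * v x) := by
  rw [pd_arctan (by fun_prop (disch := exact h0)), pd_div hv hu h0]
  field_simp

theorem grad_arctan_div (hu : DifferentiableAt ℝ u x) (hv : DifferentiableAt ℝ v x)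
    (h0 : u x ≠ 0) :
    grad (fun y => Real.arctan (v y / u y)) x =
      arctanRatioGrad (u x) (v x) (grad u x) (grad v x) := by
  ext i
  simp only [grad, arctanRatioGrad, pd_arctan_div hu hv h0, Pi.smul_apply, Pi.sub_apply,
    smul_eq_mul]
  ring

theorem hess_arctan_div (hu : ContDiffAt ℝ 2 u x) (hv : ContDiffAt ℝ 2 v x) (h0 : u x ≠ 0) :
    hess (fun y => Real.arctan (v y / u y)) x =
      arctanRatioHess (u x) (v x) (grad u x) (grad v x) (hess u x) (hess v x) := by
  have hu1 := hu.differentiableAt two_ne_zero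
  have hv1 := hv.differentiableAt two_ne_zero
  have hpu := hu.differentiableAt_pd
  have hpv := hv.differentiableAt_pd
  have hW : u x * u x + v x * v x ≠ 0 :=
    (add_pos_of_pos_of_nonneg (mul_self_pos.2 h0) (mul_self_nonneg _)).ne'
  ext i j
  have hpd : pd (fun y => Real.arctan (v y / u y)) j =ᶠ[𝓝 x]
      fun y => (u y * pd v j y - v y * pd u j y) / (u y * u y + v y * v y) := by
    filter_upwards [hu.eventually (by simp), hv.eventually (by simp),
      hu.continuousAt.eventually_ne h0] with y huy hvy h0y
    exact pd_arctan_div (huy.differentiableAt two_ne_zero) (hvy.differentiableAt two_ne_zero) h0y j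
  rw [hess, of_apply, hpd.pd_eq, pd_div (by fun_prop) (by fun_prop) hW,
    pd_sub (by fun_prop) (by fun_prop), pd_add (by fun_prop) (by fun_prop),
    pd_mul hu1 (hpv j), pd_mul hv1 (hpu j), pd_mul hu1 hu1, pd_mul hv1 hv1]
  simp only [arctanRatioHess, hess, grad, Matrix.sub_apply, Matrix.add_apply, Matrix.smul_apply,
    vecMulVec_apply, of_apply, Pi.add_apply, Pi.sub_apply, Pi.smul_apply, smul_eq_mul]
  field_simp
  ring

end ArctanRatio

section Constraints

variable {N : ℕ} {u v : (Fin N → ℝ) → ℝ} {x : Fin N → ℝ}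

theorem grad_dotProduct_grad (hu : ContDiffAt ℝ 2 u x) (hv : ContDiffAt ℝ 2 v x) :
    grad (fun y => grad u y ⬝ᵥ grad v y) x = hess v x *ᵥ grad u x + hess u x *ᵥ grad v x := by
  have hpu := hu.differentiableAt_pd
  have hpv := hv.differentiableAt_pd
  ext i
  simp only [grad, dotProduct]
  rw [pd_sum (F := fun k y => pd u k y * pd v k y) fun k _ => (hpu k).mul (hpv k)]
  simp only [pd_mul (hpu _) (hpv _), Finset.sum_add_distrib, Pi.add_apply, mulVec, dotProduct,
    hess, grad, of_apply, mul_comm]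

theorem hess_mulVec_grad_eq_neg_of_dotProduct_eq_zero (hu : ContDiffAt ℝ 2 u x)
    (hv : ContDiffAt ℝ 2 v x) (h : ∀ᶠ y in 𝓝 x, grad u y ⬝ᵥ grad v y = 0) :
    hess v x *ᵥ grad u x = -(hess u x *ᵥ grad v x) := by
  have h' : (fun y => grad u y ⬝ᵥ grad v y) =ᶠ[𝓝 x] fun _ => 0 := h
  rw [← add_eq_zero_iff_eq_neg, ← grad_dotProduct_grad hu hv, h'.grad_eq, grad_const]

theorem hess_mulVec_grad_eq_of_dotProduct_self_eq (hu : ContDiffAt ℝ 2 u x)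
    (hv : ContDiffAt ℝ 2 v x) (h : ∀ᶠ y in 𝓝 x, grad u y ⬝ᵥ grad u y = grad v y ⬝ᵥ grad v y) :
    hess u x *ᵥ grad u x = hess v x *ᵥ grad v x := by
  have h' := Filter.EventuallyEq.grad_eq (f := fun y => grad u y ⬝ᵥ grad u y) h
  rw [grad_dotProduct_grad hu hu, grad_dotProduct_grad hv hv, ← two_smul ℝ, ← two_smul ℝ] at h'
  exact smul_right_injective _ two_ne_zero h'

end Constraints

/-- If `u, v` are orthogonal twin-harmonics on an open `Ω ⊆ ℝ^N` with `u ≠ 0` on `Ω`,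
then `f(x) = arctan(v(x)/u(x))` is perfectly harmonic on `Ω`. -/
theorem arctan_ratio_perfectly_harmonic {N : ℕ}
    (Ω : Set (Fin N → ℝ)) (hΩ : IsOpen Ω)
    (u v : (Fin N → ℝ) → ℝ)
    (huv : TwinHarmonics u v Ω) (hu : ∀ x ∈ Ω, u x ≠ 0) :
    PerfectlyHarmonic (fun x => Real.arctan (v x / u x)) Ω := by
  obtain ⟨hu2, hv2, htwin⟩ := huv
  refine ⟨Real.contDiff_arctan.comp_contDiffOn (hv2.div hu2 hu), fun x hx => ?_⟩
  simp only [lap_eq_trace_hess, infLap_eq_dotProduct_hess_mulVec, sum_pd_sq, sum_pd_mul_pd]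
    at htwin ⊢
  have hux := hu2.contDiffAt (hΩ.mem_nhds hx)
  have hvx := hv2.contDiffAt (hΩ.mem_nhds hx)
  have htwin_near := Filter.eventually_of_mem (hΩ.mem_nhds hx) htwin
  obtain ⟨hlap, hinf, hnorm, hpq⟩ := htwin x hx
  have hUp := hess_mulVec_grad_eq_of_dotProduct_self_eq hux hvx
    (htwin_near.mono fun _ h => h.2.2.1)
  have hVp := hess_mulVec_grad_eq_neg_of_dotProduct_eq_zero hux hvx
    (htwin_near.mono fun _ h => h.2.2.2)
  rw [grad_arctan_div (hux.differentiableAt two_ne_zero) (hvx.differentiableAt two_ne_zero)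
    (hu x hx), hess_arctan_div hux hvx (hu x hx)]
  exact ⟨trace_arctanRatioHess hpq hnorm hlap,
    arctanRatioGrad_dotProduct_arctanRatioHess_mulVec hpq hnorm hinf hUp hVp⟩

end
end

section
/- Let h be a holomorphic function on an open set Ω ⊆ ℂ^m belonging to the class 𝒯^m with weight μ. Identify ℂ^m with ℝ^{2m} via z_k = x_k + i·y_k and set u(x,y) = Re h(z) and v(x,y) = Im h(z). Then u and v are harmonic (Δu = Δv = 0), and Δ₁u = −μ̃·u and Δ₁v = −μ̃·v on the corresponding open subset of ℝ^{2m}, where μ̃(x,y) = μ(x+iy); that is, u and v are eigenfunctions of the 1-Laplacian with the same weight. -/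
/-!
For `ω : ℂ` put `u_ω = Re (ω h) ∘ emb`. By the chain rule its derivatives along `x_k` and `y_k` are
`Re (ω h_{z_k})` and `Re (ω i h_{z_k})`, and its second derivatives are `Re (ω c c' h_{z_k z_l})`
with `c, c' ∈ {1, i}`. Since `i² = -1` the Laplacian cancels in pairs, and the four real blocks of
`Δ_∞ u_ω` for each pair `(k, l)` combine into `|ω|² Re (ω conj(h_{z_k z_l}) h_{z_k} h_{z_l})`, which
the `𝒯^m` condition turns into `|ω|² μ u_ω`. Now `u_1 = Re h` and `u_{-i} = Im h`.

The second derivatives exist because a directional derivative `z ↦ Dh(z) v` of a holomorphic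
function is again holomorphic: it is a Cauchy integral over a small circle `z + t v`, which may be
differentiated under the integral sign since Cauchy's estimate bounds `Dh` locally.
-/

noncomputable section

/-- The complex partial derivative `h_{zᵢ}` of a function on `ℂ^m`. -/
noncomputable def cpd {m : ℕ} (h : (Fin m → ℂ) → ℂ) (i : Fin m) (z : Fin m → ℂ) : ℂ :=
  fderiv ℂ h z (Pi.single i 1)

/-- The identification `ℝ^(m+m) ≅ ℂ^m`, `(x, y) ↦ x + i·y` componentwise. -/
noncomputable def emb {m : ℕ} (w : Fin (m + m) → ℝ) : Fin m → ℂ :=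
  fun k => (w (Fin.castAdd m k) : ℂ) + (w (Fin.natAdd m k) : ℂ) * Complex.I

open Complex Metric Filter Topology Real MeasureTheory

section

variable {E F : Type*} [NormedAddCommGroup E] [NormedSpace ℂ E]
  [NormedAddCommGroup F] [NormedSpace ℂ F] {f : E → F}

theorem norm_fderiv_le_of_forall_mem_ball_norm_le {c : E} {r M : ℝ} (hr : 0 < r)
    (hf : DifferentiableOn ℂ f (ball c r)) (hM : ∀ z ∈ ball c r, ‖f z‖ ≤ M) :
    ‖fderiv ℂ f c‖ ≤ 2 * M / r := by
  refine Complex.norm_fderiv_le_div_of_mapsTo_ball hf (fun z hz => ?_) hr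
  rw [mem_closedBall, dist_eq_norm]
  linarith [norm_sub_le (f z) (f c), hM z hz, hM c (mem_ball_self hr)]

theorem DifferentiableOn.exists_ball_forall_norm_fderiv_le {s : Set E} (hs : IsOpen s)
    (hf : DifferentiableOn ℂ f s) {x₀ : E} (hx₀ : x₀ ∈ s) :
    ∃ R > 0, ∃ C, ball x₀ R ⊆ s ∧ ∀ y ∈ ball x₀ R, ‖fderiv ℂ f y‖ ≤ C := by
  obtain ⟨δ, hδ, hδs⟩ := Metric.isOpen_iff.1 hs x₀ hx₀
  obtain ⟨ε, hε, hεf⟩ := Metric.continuousAt_iff.1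
    (hf.continuousOn.continuousAt (hs.mem_nhds hx₀)) 1 one_pos
  set R := min δ ε / 2 with hRdef
  have hR : 0 < R := by positivity
  have hball : ∀ y ∈ ball x₀ R, ball y R ⊆ ball x₀ (min δ ε) := fun y hy =>
    ball_subset_ball' (by rw [mem_ball] at hy; linarith)
  refine ⟨R, hR, 2 * (‖f x₀‖ + 1) / R, ?_, fun y hy => ?_⟩
  · exact (ball_subset_ball (by linarith [min_le_left δ ε, min_le_right δ ε])).trans hδs
  refine norm_fderiv_le_of_forall_mem_ball_norm_le hR
    (hf.mono ((hball y hy).trans ((ball_subset_ball (min_le_left δ ε)).trans hδs)))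
    fun z hz => ?_
  have hz' := hball y hy hz
  have := hεf (lt_of_lt_of_le hz' (min_le_right δ ε))
  rw [dist_eq_norm] at this
  linarith [norm_le_norm_add_norm_sub' (f z) (f x₀)]

theorem DifferentiableAt.hasDerivAt_comp_add_smul {x v : E} {t : ℂ}
    (hf : DifferentiableAt ℂ f (x + t • v)) :
    HasDerivAt (fun s : ℂ => f (x + s • v)) (fderiv ℂ f (x + t • v) v) t :=
  hf.hasFDerivAt.comp_hasDerivAt t (by simpa using ((hasDerivAt_id t).smul_const v).const_add x)

theorem fderiv_apply_eq_circleIntegral [CompleteSpace F] {x v : E} {ρ : ℝ} (hρ : 0 < ρ)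
    (hf : ∀ t ∈ closedBall (0 : ℂ) ρ, DifferentiableAt ℂ f (x + t • v)) :
    fderiv ℂ f x v = (2 * π * I)⁻¹ • ∮ t in C(0, ρ), (1 / t ^ 2) • f (x + t • v) := by
  have hd : DifferentiableOn ℂ (fun t : ℂ => f (x + t • v)) (closedBall 0 ρ) := fun t ht =>
    (hf t ht).hasDerivAt_comp_add_smul.differentiableAt.differentiableWithinAt
  have h0 := (hf 0 (mem_closedBall_self hρ.le)).hasDerivAt_comp_add_smul
  simp only [zero_smul, add_zero] at h0
  have := hd.deriv_eq_smul_circleIntegral (c := 0) hρ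
  simp only [sub_zero] at this
  rw [this, h0.deriv, smul_smul, inv_mul_cancel₀ two_pi_I_ne_zero, one_smul]

theorem DifferentiableOn.differentiableAt_intervalIntegral_smul_comp_add [FiniteDimensional ℂ E]
    [CompleteSpace F] [SecondCountableTopology F] {s : Set E} (hs : IsOpen s)
    (hf : DifferentiableOn ℂ f s) {C : ℝ} (hC : ∀ y ∈ s, ‖fderiv ℂ f y‖ ≤ C)
    {k : ℝ → ℂ} (hk : Continuous k) {γ : ℝ → E} (hγ : Continuous γ) {x₀ : E} {U : Set E}
    (hU : U ∈ 𝓝 x₀) (hUs : ∀ x ∈ U, ∀ θ, x + γ θ ∈ s) (a b : ℝ) :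
    DifferentiableAt ℂ (fun x => ∫ θ in a..b, k θ • f (x + γ θ)) x₀ := by
  borelize E
  have hcont : ∀ x ∈ U, Continuous fun θ => k θ • f (x + γ θ) := fun x hx =>
    hk.smul (hf.continuousOn.comp_continuous (continuous_const.add hγ) (hUs x hx))
  have hderiv : ∀ x ∈ U, ∀ θ, HasFDerivAt (fun x => k θ • f (x + γ θ))
      (k θ • fderiv ℂ f (x + γ θ)) x := fun x hx θ =>
    (((hf.differentiableAt (hs.mem_nhds (hUs x hx θ))).hasFDerivAt).comp x
      ((hasFDerivAt_id x).add_const (γ θ))).const_smul (k θ)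
  refine (intervalIntegral.hasFDerivAt_integral_of_dominated_of_fderiv_le
    (F' := fun x θ => k θ • fderiv ℂ f (x + γ θ)) (bound := fun θ => ‖k θ‖ * C) hU
    (eventually_of_mem hU fun x hx => (hcont x hx).aestronglyMeasurable)
    ((hcont x₀ (mem_of_mem_nhds hU)).intervalIntegrable a b)
    ((hk.measurable.smul ((measurable_fderiv ℂ f).comp
      (measurable_const.add hγ.measurable))).aestronglyMeasurable)
    (ae_of_all _ fun θ _ x hx => ?_)
    ((hk.norm.mul continuous_const).intervalIntegrable a b)
    (ae_of_all _ fun θ _ x hx => hderiv x hx θ)).differentiableAt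
  rw [norm_smul]
  exact mul_le_mul_of_nonneg_left (hC _ (hUs x hx θ)) (norm_nonneg _)

theorem DifferentiableOn.differentiableAt_fderiv_apply [FiniteDimensional ℂ E] [CompleteSpace F]
    [SecondCountableTopology F] {s : Set E} (hs : IsOpen s) (hf : DifferentiableOn ℂ f s)
    {x₀ : E} (hx₀ : x₀ ∈ s) (v : E) :
    DifferentiableAt ℂ (fun x => fderiv ℂ f x v) x₀ := by
  obtain ⟨R, hR, C, hRs, hC⟩ := hf.exists_ball_forall_norm_fderiv_le hs hx₀
  set ρ := R / (2 * (‖v‖ + 1)) with hρdef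
  have hρ : 0 < ρ := by positivity
  have hmem : ∀ x ∈ ball x₀ (R / 2), ∀ t : ℂ, ‖t‖ ≤ ρ → x + t • v ∈ ball x₀ R := by
    intro x hx t ht
    have htv : ‖t • v‖ ≤ R / 2 := by
      rw [norm_smul]
      calc ‖t‖ * ‖v‖ ≤ ρ * (‖v‖ + 1) := by gcongr; linarith
        _ = R / 2 := by rw [hρdef]; field_simp
    rw [mem_ball, dist_eq_norm] at hx ⊢
    calc ‖x + t • v - x₀‖ ≤ ‖x - x₀‖ + ‖t • v‖ := by
          rw [add_sub_right_comm]; exact norm_add_le _ _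
      _ < R := by linarith
  -- `k θ • f (x + circleMap 0 ρ θ • v)` is the integrand of `∮ t in C(0, ρ), t⁻² • f (x + t • v)`
  set k : ℝ → ℂ := fun θ => circleMap 0 ρ θ * I * (1 / circleMap 0 ρ θ ^ 2)
  have hk : Continuous k := by
    have hne : ∀ θ, circleMap 0 ρ θ ^ 2 ≠ 0 := fun θ => pow_ne_zero 2 (circleMap_ne_center hρ.ne')
    exact ((continuous_circleMap 0 ρ).mul continuous_const).mul
      (continuous_const.div ((continuous_circleMap 0 ρ).pow 2) hne)
  have hrep : ∀ x ∈ ball x₀ (R / 2), fderiv ℂ f x v =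
      (2 * π * I)⁻¹ • ∫ θ in 0..2 * π, k θ • f (x + circleMap 0 ρ θ • v) := by
    intro x hx
    rw [fderiv_apply_eq_circleIntegral hρ fun t ht =>
      hf.differentiableAt (hs.mem_nhds (hRs (hmem x hx t (by simpa using ht))))]
    simp only [circleIntegral, deriv_circleMap, smul_smul, k]
  refine DifferentiableAt.congr_of_eventuallyEq ?_
    (eventually_of_mem (ball_mem_nhds x₀ (by positivity)) hrep)
  exact ((hf.mono hRs).differentiableAt_intervalIntegral_smul_comp_add isOpen_ball hC hk
    ((continuous_circleMap 0 ρ).smul continuous_const) (ball_mem_nhds x₀ (by positivity))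
    (fun x hx θ => hmem x hx _ (by simp [abs_of_pos hρ])) _ _).const_smul _

end

theorem pd_congr_of_eventuallyEq {N : ℕ} {f g : (Fin N → ℝ) → ℝ} {x : Fin N → ℝ}
    (hfg : f =ᶠ[𝓝 x] g) (i : Fin N) : pd f i x = pd g i x := by
  rw [pd, pd, hfg.fderiv_eq]

noncomputable def embCLM (m : ℕ) : (Fin (m + m) → ℝ) →L[ℝ] (Fin m → ℂ) :=
  LinearMap.toContinuousLinearMap
    { toFun := emb
      map_add' := fun x y => by funext k; simp only [emb, Pi.add_apply, ofReal_add]; ring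
      map_smul' := fun c x => by
        funext k; simp [emb, real_smul]; ring }

@[simp]
theorem coe_embCLM (m : ℕ) : ⇑(embCLM m) = emb := rfl

theorem Fin.castAdd_ne_natAdd {m : ℕ} (k l : Fin m) : Fin.castAdd m k ≠ Fin.natAdd m l := by
  simp only [ne_eq, Fin.ext_iff, Fin.val_castAdd, Fin.val_natAdd]
  omega

theorem emb_single_castAdd {m : ℕ} (k : Fin m) :
    emb (Pi.single (Fin.castAdd m k) 1) = Pi.single k 1 := by
  funext l
  simp only [emb, Pi.single_apply, Fin.castAdd_inj, if_neg (Fin.castAdd_ne_natAdd _ _).symm]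
  split_ifs <;> simp

theorem emb_single_natAdd {m : ℕ} (k : Fin m) :
    emb (Pi.single (Fin.natAdd m k) 1) = Pi.single k I := by
  funext l
  simp only [emb, Pi.single_apply, Fin.natAdd_inj, if_neg (Fin.castAdd_ne_natAdd _ _)]
  split_ifs <;> simp

section

variable {m : ℕ} (ω : ℂ)

theorem pd_re_mul_comp_emb {G : (Fin m → ℂ) → ℂ} {x : Fin (m + m) → ℝ}
    (hG : DifferentiableAt ℂ G (emb x)) (i : Fin (m + m)) :
    pd (fun y => (ω * G (emb y)).re) i x = (ω * fderiv ℂ G (emb x) (emb (Pi.single i 1))).re := by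
  have hGe : HasFDerivAt (fun y => G (emb y))
      ((fderiv ℂ G (emb x)).restrictScalars ℝ ∘L embCLM m) x :=
    (hG.hasFDerivAt.restrictScalars ℝ).comp x (embCLM m).hasFDerivAt
  rw [pd, HasFDerivAt.fderiv (f := fun y => (ω * G (emb y)).re)
    (reCLM.hasFDerivAt.comp x (hGe.const_mul ω))]
  simp

theorem pd_re_mul_comp_emb_castAdd {G : (Fin m → ℂ) → ℂ} {x : Fin (m + m) → ℝ}
    (hG : DifferentiableAt ℂ G (emb x)) (k : Fin m) :
    pd (fun y => (ω * G (emb y)).re) (Fin.castAdd m k) x = (ω * cpd G k (emb x)).re := by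
  rw [pd_re_mul_comp_emb ω hG, emb_single_castAdd, cpd]

theorem pd_re_mul_comp_emb_natAdd {G : (Fin m → ℂ) → ℂ} {x : Fin (m + m) → ℝ}
    (hG : DifferentiableAt ℂ G (emb x)) (k : Fin m) :
    pd (fun y => (ω * G (emb y)).re) (Fin.natAdd m k) x = (ω * I * cpd G k (emb x)).re := by
  have hI : (Pi.single k I : Fin m → ℂ) = I • Pi.single k 1 := by
    rw [← Pi.single_smul', smul_eq_mul, mul_one]
  rw [pd_re_mul_comp_emb ω hG, emb_single_natAdd, cpd, hI, map_smul, smul_eq_mul, mul_assoc]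

variable {Ω : Set (Fin m → ℂ)} {h : (Fin m → ℂ) → ℂ} {w : Fin (m + m) → ℝ}

theorem eventually_differentiableAt_comp_emb (hΩ : IsOpen Ω) (hh : DifferentiableOn ℂ h Ω)
    (hw : emb w ∈ Ω) : ∀ᶠ y in 𝓝 w, DifferentiableAt ℂ h (emb y) :=
  Filter.mem_of_superset ((embCLM m).continuous.continuousAt.preimage_mem_nhds (hΩ.mem_nhds hw))
    fun _ hy => hh.differentiableAt (hΩ.mem_nhds hy)

theorem pd_pd_re_mul_comp_emb_castAdd (hΩ : IsOpen Ω) (hh : DifferentiableOn ℂ h Ω)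
    (hw : emb w ∈ Ω) (l : Fin m) (i : Fin (m + m)) :
    pd (pd (fun x => (ω * h (emb x)).re) (Fin.castAdd m l)) i w =
      pd (fun y => (ω * cpd h l (emb y)).re) i w :=
  pd_congr_of_eventuallyEq ((eventually_differentiableAt_comp_emb hΩ hh hw).mono
    fun _ hy => pd_re_mul_comp_emb_castAdd ω hy l) i

theorem pd_pd_re_mul_comp_emb_natAdd (hΩ : IsOpen Ω) (hh : DifferentiableOn ℂ h Ω)
    (hw : emb w ∈ Ω) (l : Fin m) (i : Fin (m + m)) :
    pd (pd (fun x => (ω * h (emb x)).re) (Fin.natAdd m l)) i w =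
      pd (fun y => (ω * I * cpd h l (emb y)).re) i w :=
  pd_congr_of_eventuallyEq ((eventually_differentiableAt_comp_emb hΩ hh hw).mono
    fun _ hy => pd_re_mul_comp_emb_natAdd ω hy l) i

theorem lap_re_mul_comp_emb (hΩ : IsOpen Ω) (hh : DifferentiableOn ℂ h Ω) (hw : emb w ∈ Ω) :
    lap (fun x => (ω * h (emb x)).re) w = 0 := by
  have hd2 : ∀ l, DifferentiableAt ℂ (cpd h l) (emb w) := fun l =>
    hh.differentiableAt_fderiv_apply hΩ hw _
  rw [lap, Fin.sum_univ_add, ← Finset.sum_add_distrib]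
  refine Finset.sum_eq_zero fun k _ => ?_
  rw [pd_pd_re_mul_comp_emb_castAdd ω hΩ hh hw, pd_pd_re_mul_comp_emb_natAdd ω hΩ hh hw,
    pd_re_mul_comp_emb_castAdd _ (hd2 k), pd_re_mul_comp_emb_natAdd _ (hd2 k), mul_assoc ω I I,
    I_mul_I]
  simp

-- The four `(x, y)`-blocks of `Δ_∞ Re (ω h)` for one pair `(k, l)`, where `a = h_{z_k}`,
-- `b = h_{z_l}` and `H = h_{z_k z_l}`.
theorem sum_re_mul_re_mul_re_eq (ω a b H : ℂ) :
    (ω * a).re * (ω * b).re * (ω * H).re + (ω * a).re * (ω * I * b).re * (ω * I * H).re +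
      ((ω * I * a).re * (ω * b).re * (ω * I * H).re +
        (ω * I * a).re * (ω * I * b).re * (ω * I * I * H).re) =
      normSq ω * (ω * ((starRingEnd ℂ) H * a * b)).re := by
  simp only [mul_re, mul_im, I_re, I_im, conj_re, conj_im, normSq_apply]
  ring

theorem infLap_re_mul_comp_emb (hΩ : IsOpen Ω) (hh : DifferentiableOn ℂ h Ω) (hw : emb w ∈ Ω) :
    infLap (fun x => (ω * h (emb x)).re) w = normSq ω * (ω * ∑ i, ∑ j,
      (starRingEnd ℂ) (cpd (cpd h j) i (emb w)) * cpd h i (emb w) * cpd h j (emb w)).re := by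
  have hd1 : DifferentiableAt ℂ h (emb w) := hh.differentiableAt (hΩ.mem_nhds hw)
  have hd2 : ∀ l, DifferentiableAt ℂ (cpd h l) (emb w) := fun l =>
    hh.differentiableAt_fderiv_apply hΩ hw _
  simp only [infLap, Fin.sum_univ_add, pd_pd_re_mul_comp_emb_castAdd ω hΩ hh hw,
    pd_pd_re_mul_comp_emb_natAdd ω hΩ hh hw, pd_re_mul_comp_emb_castAdd _ hd1,
    pd_re_mul_comp_emb_natAdd _ hd1, pd_re_mul_comp_emb_castAdd _ (hd2 _),
    pd_re_mul_comp_emb_natAdd _ (hd2 _), ← Finset.sum_add_distrib, sum_re_mul_re_mul_re_eq]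
  simp only [Finset.mul_sum, re_sum]

theorem lap1_re_mul_comp_emb (hΩ : IsOpen Ω) (hh : DifferentiableOn ℂ h Ω) (hw : emb w ∈ Ω)
    {μ : ℝ} (hT : ∑ i, ∑ j, (starRingEnd ℂ) (cpd (cpd h j) i (emb w)) * cpd h i (emb w) *
      cpd h j (emb w) = μ * h (emb w)) :
    lap1 (fun x => (ω * h (emb x)).re) w = -(normSq ω * μ) * (ω * h (emb w)).re := by
  rw [lap1, lap_re_mul_comp_emb ω hΩ hh hw, infLap_re_mul_comp_emb ω hΩ hh hw, hT,
    mul_left_comm, re_ofReal_mul]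
  ring

end

/-- If `h` is holomorphic on an open `Ω ⊆ ℂ^m` and belongs to the class `𝒯^m` with weight `μ`,
then `u = Re h` and `v = Im h` are harmonic and satisfy `Δ₁u = −μ̃·u`, `Δ₁v = −μ̃·v` on the
corresponding open subset of `ℝ^(2m)`, i.e. they are eigenfunctions of the 1-Laplacian with
the same weight. -/
theorem re_im_eigenfunctions {m : ℕ} (Ω : Set (Fin m → ℂ)) (hΩ : IsOpen Ω)
    (h : (Fin m → ℂ) → ℂ) (hh : DifferentiableOn ℂ h Ω)
    (μ : (Fin m → ℂ) → ℝ)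
    (hT : ∀ z ∈ Ω, ∑ i, ∑ j,
        (starRingEnd ℂ) (cpd (cpd h j) i z) * cpd h i z * cpd h j z = (μ z : ℂ) * h z) :
    ∀ w : Fin (m + m) → ℝ, emb w ∈ Ω →
      lap (fun x => (h (emb x)).re) w = 0 ∧
      lap (fun x => (h (emb x)).im) w = 0 ∧
      lap1 (fun x => (h (emb x)).re) w = -μ (emb w) * (h (emb w)).re ∧
      lap1 (fun x => (h (emb x)).im) w = -μ (emb w) * (h (emb w)).im := by
  intro w hw
  have hTw := hT (emb w) hw
  refine ⟨?_, ?_, ?_, ?_⟩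
  · simpa using lap_re_mul_comp_emb 1 hΩ hh hw
  · simpa using lap_re_mul_comp_emb (-I) hΩ hh hw
  · simpa using lap1_re_mul_comp_emb 1 hΩ hh hw hTw
  · simpa using lap1_re_mul_comp_emb (-I) hΩ hh hw hTw
end
end
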